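/- Let p, q ∈ ℚ∞ and x, y ∈ H. If ⟨v_p^x, v_q^y⟩ = 0 and ⟨v_q^y, v_p^x⟩ = 0, then p = q and x ∉ {y, -y}. -/

import Mathlib

open Matrix

abbrev V6 := Fin 6 → ℤ

def C6 : Matrix (Fin 6) (Fin 6) ℤ :=
  !![1,0,-1,-1,1,1;
     0,1,-1,-1,1,1;
     0,0,1,0,-1,-1;
     0,0,0,1,-1,-1;
     0,0,0,0,1,0;
     0,0,0,0,0,1]

/-- The bilinear form `⟨x,y⟩ = xᵀ C y` on `ℤ^6`. -/
def form (x y : V6) : ℤ := x ⬝ᵥ C6.mulVec y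

/-- The quaternion `i`. -/
def qI : Quaternion ℤ := ⟨0,1,0,0⟩
/-- The quaternion `j`. -/
def qJ : Quaternion ℤ := ⟨0,0,1,0⟩
/-- The quaternion `k`. -/
def qK : Quaternion ℤ := ⟨0,0,0,1⟩

instance : DecidableEq (Quaternion ℤ) := fun x y =>
  decidable_of_iff (x.re = y.re ∧ x.imI = y.imI ∧ x.imJ = y.imJ ∧ x.imK = y.imK)
    ⟨fun ⟨h1, h2, h3, h4⟩ => QuaternionAlgebra.ext h1 h2 h3 h4,
     fun h => by subst h; exact ⟨rfl, rfl, rfl, rfl⟩⟩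

/-- The quaternion group `H = {±1, ±i, ±j, ±k}`. -/
def Hset : Finset (Quaternion ℤ) := {1, -1, qI, -qI, qJ, -qJ, qK, -qK}

/-- The subset `H⁺ = {1, i, j, k}`. -/
def Hplus : Finset (Quaternion ℤ) := {1, qI, qJ, qK}

/-- Index type for the three special slopes `0`, `1`, `∞`. -/
inductive Ty | zero | one | inf
deriving DecidableEq

def h0 : V6 := ![0,0,1,1,1,1]
def h1 : V6 := ![1,1,2,2,1,1]
def hinf : V6 := ![1,1,1,1,0,0]

def hTy : Ty → V6
  | .zero => h0
  | .one => h1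
  | .inf => hinf

/-- The vectors `v_t^x` for `t ∈ {0,1,∞}` and `x ∈ H⁺`. -/
def vposTy : Ty → Quaternion ℤ → V6
  | .zero, x => if x = 1 then ![0,0,1,0,1,0] else if x = qI then ![-1,0,0,0,0,0]
      else if x = qJ then ![0,0,1,0,0,1] else ![0,1,1,1,1,1]
  | .one, x => if x = 1 then ![1,0,1,1,1,0] else if x = qI then ![0,1,1,1,1,0]
      else if x = qJ then ![0,0,1,0,0,0] else ![1,1,2,1,1,1]
  | .inf, x => if x = 1 then ![1,0,0,1,0,0] else if x = qI then ![1,1,1,1,1,0]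
      else if x = qJ then ![0,0,0,0,0,-1] else ![1,0,1,0,0,0]

/-- The vectors `v_t^x` for `t ∈ {0,1,∞}` and `x ∈ H`, with `v_t^{-x} = h_t - v_t^x`. -/
def vTy (t : Ty) (x : Quaternion ℤ) : V6 :=
  if x ∈ Hplus then vposTy t x else hTy t - vposTy t (-x)

/-- `a(q)`: numerator, with `a(∞) = 1`. -/
def aQ : WithTop ℚ → ℤ := WithTop.recTopCoe 1 Rat.num

/-- `b(q)`: denominator, with `b(∞) = 0`. -/
def bQ : WithTop ℚ → ℤ := WithTop.recTopCoe 0 (fun x => (x.den : ℤ))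

/-- The type `t(q) ∈ {0,1,∞}` of a slope `q`. -/
def tyQ (q : WithTop ℚ) : Ty :=
  if aQ q % 2 = 0 then Ty.zero else if bQ q % 2 = 1 then Ty.one else Ty.inf

/-- `⌊n⌋₂ = n/2` for even `n` and `(n-1)/2` for odd `n`. -/
def half2 (n : ℤ) : ℤ := if Even n then n / 2 else (n - 1) / 2

/-- `h_q = b(q)·h₀ + a(q)·h_∞`. -/
def hQ (q : WithTop ℚ) : V6 := bQ q • h0 + aQ q • hinf

/-- `v_q^x = v_{t(q)}^x + ⌊b(q)⌋₂·h₀ + ⌊a(q)⌋₂·h_∞`. -/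
def vQ (q : WithTop ℚ) (x : Quaternion ℤ) : V6 :=
  vTy (tyQ q) x + half2 (bQ q) • h0 + half2 (aQ q) • hinf

/-- `rk e = ⟨e, h_∞⟩`. -/
def rk (e : V6) : ℤ := form e hinf

/-- `deg e = ⟨h₀, e⟩`. -/
def degV (e : V6) : ℤ := form h0 e

/-- `e` is positive if `rk e > 0`, or `rk e = 0` and `deg e > 0`. -/
def PosV (e : V6) : Prop := 0 < rk e ∨ (rk e = 0 ∧ 0 < degV e)

/-- `d(p,q) = |a(q)b(p) - a(p)b(q)|`. -/
def dQ (p q : WithTop ℚ) : ℤ := |aQ q * bQ p - aQ p * bQ q|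

/-- Complexity `c(p) = |a(p)| + |b(p)| + |a(p)+b(p)|`. -/
def cpx (p : WithTop ℚ) : ℤ := |aQ p| + |bQ p| + |aQ p + bQ p|

/-!
Write `v_q^x = v_t^x + m·h₀ + n·h_∞` with `t = t(q)`, `a(q) = 2n + α_t` and `b(q) = 2m + β_t`, where
`(α_t, β_t)` are the residues of `(a, b)` mod 2 for type `t`. The vectors `h₀, h_∞` are isotropic with
`⟨h₀,h_∞⟩ = 2 = -⟨h_∞,h₀⟩`, and the pairings of `v_t^x` with `h₀, h_∞` only depend on `t`. Hence in
`⟨v_p^x, v_q^y⟩ + ⟨v_q^y, v_p^x⟩` all shift terms cancel, leaving the symmetrised pairing of two of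
the 24 basic vectors `v_t^x`; a finite check shows that it vanishes only if `t(p) = t(q)`, `x ≠ ±y` and
`⟨v_{t(p)}^x, v_{t(q)}^y⟩ = 0`. With equal types, `⟨v_p^x, v_q^y⟩` is then half the
determinant `a(q)b(p) - a(p)b(q)`, so it vanishes only if `p = q`.
-/

def Ty.aMod2 : Ty → ℤ
  | .zero => 0
  | .one => 1
  | .inf => 1

def Ty.bMod2 : Ty → ℤ
  | .zero => 1
  | .one => 1
  | .inf => 0

section Form

lemma form_add_left (u v w : V6) : form (u + v) w = form u w + form v w := by
  simp only [form, add_dotProduct]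

lemma form_add_right (u v w : V6) : form u (v + w) = form u v + form u w := by
  simp only [form, mulVec_add, dotProduct_add]

lemma form_smul_left (c : ℤ) (v w : V6) : form (c • v) w = c * form v w := by
  simp only [form, smul_dotProduct, smul_eq_mul]

lemma form_smul_right (c : ℤ) (v w : V6) : form v (c • w) = c * form v w := by
  simp only [form, mulVec_smul, dotProduct_smul, smul_eq_mul]

lemma form_h0_h0 : form h0 h0 = 0 := by decide

lemma form_hinf_hinf : form hinf hinf = 0 := by decide

lemma form_h0_hinf : form h0 hinf = 2 := by decide

lemma form_hinf_h0 : form hinf h0 = -2 := by decide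

lemma form_add_smul_h0_add_smul_hinf (v w : V6) (m n m' n' : ℤ) :
    form (v + m • h0 + n • hinf) (w + m' • h0 + n' • hinf) =
      form v w + m' * form v h0 + n' * form v hinf + m * form h0 w + n * form hinf w
        + 2 * (m * n' - n * m') := by
  simp only [form_add_left, form_add_right, form_smul_left, form_smul_right,
    form_h0_h0, form_hinf_hinf, form_h0_hinf, form_hinf_h0]
  ring

end Form

section BasicVectors

variable {x y : Quaternion ℤ}

lemma form_vTy_h0 (t : Ty) (hx : x ∈ Hset) : form (vTy t x) h0 = -t.aMod2 := by
  revert x; cases t <;> decide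

lemma form_vTy_hinf (t : Ty) (hx : x ∈ Hset) : form (vTy t x) hinf = t.bMod2 := by
  revert x; cases t <;> decide

lemma form_h0_vTy (t : Ty) (hx : x ∈ Hset) : form h0 (vTy t x) = t.aMod2 := by
  revert x; cases t <;> decide

lemma form_hinf_vTy (t : Ty) (hx : x ∈ Hset) : form hinf (vTy t x) = -t.bMod2 := by
  revert x; cases t <;> decide

lemma eq_and_form_vTy_eq_zero_of_form_add_form_eq_zero (t t' : Ty) (hx : x ∈ Hset) (hy : y ∈ Hset)
    (h : form (vTy t x) (vTy t' y) + form (vTy t' y) (vTy t x) = 0) :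
    t = t' ∧ form (vTy t x) (vTy t' y) = 0 ∧ x ≠ y ∧ x ≠ -y := by
  revert h; revert y; revert x
  cases t <;> cases t' <;> decide

lemma form_vTy_add_smul (t t' : Ty) (hx : x ∈ Hset) (hy : y ∈ Hset) (m n m' n' : ℤ) :
    form (vTy t x + m • h0 + n • hinf) (vTy t' y + m' • h0 + n' • hinf) =
      form (vTy t x) (vTy t' y) - m' * t.aMod2 + n' * t.bMod2 + m * t'.aMod2 - n * t'.bMod2
        + 2 * (m * n' - n * m') := by
  rw [form_add_smul_h0_add_smul_hinf, form_vTy_h0 t hx, form_vTy_hinf t hx, form_h0_vTy t' hy,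
    form_hinf_vTy t' hy]
  ring

end BasicVectors

section Slopes

@[simp] lemma aQ_top : aQ ⊤ = 1 := rfl
@[simp] lemma bQ_top : bQ ⊤ = 0 := rfl
@[simp] lemma aQ_coe (r : ℚ) : aQ r = r.num := rfl
@[simp] lemma bQ_coe (r : ℚ) : bQ r = r.den := rfl

lemma aQ_odd_or_bQ_odd (q : WithTop ℚ) : aQ q % 2 = 1 ∨ bQ q % 2 = 1 := by
  induction q using WithTop.recTopCoe with
  | top => simp
  | coe r =>
    by_contra! h
    simp only [aQ_coe, bQ_coe] at h
    have hnum : (2 : ℤ) ∣ r.num := by omega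
    have hden : ((2 : ℕ) : ℤ) ∣ r.den := by omega
    exact Nat.not_coprime_of_dvd_of_dvd one_lt_two (Int.ofNat_dvd_left.mp hnum)
      (Int.natCast_dvd_natCast.mp hden) r.reduced

lemma aQ_emod_two (q : WithTop ℚ) : aQ q % 2 = (tyQ q).aMod2 := by
  have := aQ_odd_or_bQ_odd q
  unfold tyQ
  split_ifs <;> simp only [Ty.aMod2] <;> omega

lemma bQ_emod_two (q : WithTop ℚ) : bQ q % 2 = (tyQ q).bMod2 := by
  have := aQ_odd_or_bQ_odd q
  have := Int.emod_two_eq_zero_or_one (bQ q)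
  unfold tyQ
  split_ifs <;> simp only [Ty.bMod2] <;> omega

lemma two_mul_half2 (n : ℤ) : 2 * half2 n = n - n % 2 := by
  unfold half2
  split_ifs with h <;> rw [Int.even_iff] at h <;> omega

lemma exists_vQ_eq (q : WithTop ℚ) (x : Quaternion ℤ) :
    ∃ m n : ℤ, vQ q x = vTy (tyQ q) x + m • h0 + n • hinf ∧
      aQ q = 2 * n + (tyQ q).aMod2 ∧ bQ q = 2 * m + (tyQ q).bMod2 := by
  refine ⟨half2 (bQ q), half2 (aQ q), rfl, ?_, ?_⟩
  · rw [two_mul_half2, aQ_emod_two]; ring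
  · rw [two_mul_half2, bQ_emod_two]; ring

lemma eq_of_aQ_mul_bQ_eq (p q : WithTop ℚ) (h : aQ q * bQ p = aQ p * bQ q) : p = q := by
  induction p using WithTop.recTopCoe with
  | top =>
    induction q using WithTop.recTopCoe with
    | top => rfl
    | coe s => exact absurd (by simpa using h.symm) s.den_nz
  | coe r =>
    induction q using WithTop.recTopCoe with
    | top => simp at h
    | coe s => exact congrArg _ (Rat.eq_iff_mul_eq_mul.mpr (by simpa using h.symm))

end Slopes

theorem stmt11 (p q : WithTop ℚ) (x y : Quaternion ℤ) (hx : x ∈ Hset) (hy : y ∈ Hset)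
    (h1 : form (vQ p x) (vQ q y) = 0) (h2 : form (vQ q y) (vQ p x) = 0) :
    p = q ∧ ¬(x = y ∨ x = -y) := by
  obtain ⟨m, n, hv, ha, hb⟩ := exists_vQ_eq p x
  obtain ⟨m', n', hw, ha', hb'⟩ := exists_vQ_eq q y
  rw [hv, hw, form_vTy_add_smul _ _ hx hy] at h1
  rw [hv, hw, form_vTy_add_smul _ _ hy hx] at h2
  obtain ⟨hty, horth, hxy, hxy'⟩ :=
    eq_and_form_vTy_eq_zero_of_form_add_form_eq_zero _ _ hx hy (by linear_combination h1 + h2)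
  refine ⟨eq_of_aQ_mul_bQ_eq p q ?_, fun h => h.elim hxy hxy'⟩
  rw [← hty] at h1 horth ha' hb'
  linear_combination (bQ p) * ha' + (2 * n' + (tyQ p).aMod2) * hb - (bQ q) * ha
    - (2 * n + (tyQ p).aMod2) * hb' + 2 * h1 - 2 * horth
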